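/- arXiv:2309.11912 — 3 statements merged into one kernel-verified Lean document; each statement's English description precedes it below -/
import Mathlib

section
/- Let φ, φ′ : E → E′ be isogenies of elliptic curves of the same degree d ≥ 2, and let N′ > d be an integer coprime to the characteristic. If φ and φ′ agree on the N′-torsion subgroup E[N′], then φ = φ′. -/
/-!
If `φ ≠ φ'`, then `φ - φ'` is a nonzero isogeny killing `E[N']`, so its degree is a positive
multiple of `N'²`. On the other hand the Cauchy–Schwarz bound gives
`deg (φ - φ') ≤ (√d + √d)² = 4d`, and `4d < (d + 1)² ≤ N'²` as soon as `d ≠ 1`.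
-/

lemma Real.sqrt_add_sqrt_self_sq {x : ℝ} (hx : 0 ≤ x) : (√x + √x) ^ 2 = 4 * x := by
  rw [← two_mul, mul_pow, Real.sq_sqrt hx]
  norm_num

lemma Nat.four_mul_lt_sq_of_lt {d N : ℕ} (hd : d ≠ 1) (hdN : d < N) : 4 * d < N ^ 2 := by
  have h : 4 * d < (d + 1) ^ 2 := by
    rcases Nat.lt_or_gt_of_ne hd with h | h <;> nlinarith
  exact h.trans_le (Nat.pow_le_pow_left hdN 2)

section TorsionDegree

variable {G H : Type*} [AddCommGroup G] [AddCommGroup H] (deg : (G →+ H) → ℕ)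

lemma sq_le_deg_sub_of_eqOn_torsion {N : ℕ} (hdeg_zero : ∀ ψ : G →+ H, deg ψ = 0 → ψ = 0)
    (hker : ∀ ψ : G →+ H, ψ ≠ 0 → (∀ P : G, N • P = 0 → ψ P = 0) → N ^ 2 ∣ deg ψ)
    {φ φ' : G →+ H} (hne : φ ≠ φ') (hagree : ∀ P : G, N • P = 0 → φ P = φ' P) :
    N ^ 2 ≤ deg (φ - φ') := by
  have hsub : φ - φ' ≠ 0 := sub_ne_zero.mpr hne
  have hkills : ∀ P : G, N • P = 0 → (φ - φ') P = 0 := fun P hP => by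
    rw [AddMonoidHom.sub_apply, hagree P hP, sub_self]
  exact Nat.le_of_dvd (Nat.pos_of_ne_zero (mt (hdeg_zero _) hsub)) (hker _ hsub hkills)

lemma deg_sub_le_four_mul_of_deg_eq
    (hCS : ∀ φ ψ : G →+ H, (deg (φ - ψ) : ℝ) ≤ (√(deg φ) + √(deg ψ)) ^ 2)
    {φ φ' : G →+ H} {d : ℕ} (hφ : deg φ = d) (hφ' : deg φ' = d) :
    deg (φ - φ') ≤ 4 * d := by
  have h := hCS φ φ'
  rw [hφ, hφ', Real.sqrt_add_sqrt_self_sq (Nat.cast_nonneg d)] at h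
  exact_mod_cast h

end TorsionDegree

/-- Two isogenies of the same degree `d ≥ 2` agreeing on the `N'`-torsion
with `N' > d` are equal. `Hom(E, E')` is abstracted as the group of additive maps,
with a degree function `deg` which is positive definite (`hdeg_zero`), satisfies the
Cauchy–Schwarz consequence `deg (φ - ψ) ≤ (√deg φ + √deg ψ)²` (`hCS`), and such that a
nonzero isogeny killing all of `E[N']` has degree divisible by `N'²` (`hker`). -/
theorem isogenies_agreeing_on_torsion_eq
    {E E' : Type*} [AddCommGroup E] [AddCommGroup E']
    (deg : (E →+ E') → ℕ) (d N' : ℕ)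
    (hdeg_zero : ∀ ψ : E →+ E', deg ψ = 0 ↔ ψ = 0)
    (hCS : ∀ φ ψ : E →+ E',
      (deg (φ - ψ) : ℝ) ≤ (Real.sqrt (deg φ) + Real.sqrt (deg ψ)) ^ 2)
    (hker : ∀ ψ : E →+ E', ψ ≠ 0 → (∀ P : E, N' • P = 0 → ψ P = 0) →
      N' ^ 2 ∣ deg ψ)
    (φ φ' : E →+ E')
    (hd : 2 ≤ d) (hφ : deg φ = d) (hφ' : deg φ' = d) (hN' : d < N')
    (hagree : ∀ P : E, N' • P = 0 → φ P = φ' P) :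
    φ = φ' := by
  by_contra hne
  have hlower : N' ^ 2 ≤ deg (φ - φ') :=
    sq_le_deg_sub_of_eqOn_torsion deg (fun ψ => (hdeg_zero ψ).mp) hker hne hagree
  have hupper : deg (φ - φ') ≤ 4 * d := deg_sub_le_four_mul_of_deg_eq deg hCS hφ hφ'
  exact absurd (hlower.trans hupper) (Nat.four_mul_lt_sq_of_lt (by omega) hN').not_ge
end

section
/- Let A, B be principally polarised abelian varieties of dimension g and suppose φ₁ : A → A₁ is a d₁-isogeny, φ₂ : A → A₂ is a d₂-isogeny, φ₁′ : A₁ → B is a d₂-isogeny, φ₂′ : A₂ → B is a d₁-isogeny with φ₁′ ∘ φ₁ = φ₂′ ∘ φ₂. Then the map F : A × B → A₁ × A₂ with matrix form [[φ₁, φ̃₁′], [−φ₂, φ̃₂′]] satisfies F̃ ∘ F = [d₁ + d₂] on A × B, where F̃ is the dual of F with respect to the product polarisations. -/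
/-! Writing `F` and `F̃` as `2 × 2` block matrices of homomorphisms, `F̃ ∘ F` is their matrix
product. Its diagonal entries are `φ̃₁φ₁ + φ̃₂φ₂ = [d₁ + d₂]` and `φ₁'φ̃₁' + φ₂'φ̃₂' = [d₂ + d₁]`,
while the off-diagonal entries `φ̃₁φ̃₁' - φ̃₂φ̃₂'` and `φ₁'φ₁ - φ₂'φ₂` vanish by the commuting
square and its dual. -/

namespace AddMonoidHom

variable {A B C D E G : Type*} [AddCommMonoid A] [AddCommMonoid B] [AddCommMonoid C]
  [AddCommMonoid D] [AddCommMonoid E] [AddCommMonoid G]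

/-- The homomorphism `A × B →+ C × D` with block matrix `[[f, g], [h, k]]`. -/
def fromBlocks (f : A →+ C) (g : B →+ C) (h : A →+ D) (k : B →+ D) : A × B →+ C × D :=
  (f.coprod g).prod (h.coprod k)

@[simp]
theorem fromBlocks_apply (f : A →+ C) (g : B →+ C) (h : A →+ D) (k : B →+ D) (x : A × B) :
    fromBlocks f g h k x = (f x.1 + g x.2, h x.1 + k x.2) :=
  rfl

theorem eq_fromBlocks_of_apply {F : A × B →+ C × D} {f : A →+ C} {g : B →+ C} {h : A →+ D}
    {k : B →+ D} (hF : ∀ a b, F (a, b) = (f a + g b, h a + k b)) : F = fromBlocks f g h k :=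
  ext fun x => hF x.1 x.2

theorem fromBlocks_comp_fromBlocks (p : C →+ E) (q : D →+ E) (r : C →+ G) (s : D →+ G)
    (f : A →+ C) (g : B →+ C) (h : A →+ D) (k : B →+ D) :
    (fromBlocks p q r s).comp (fromBlocks f g h k) =
      fromBlocks (p.comp f + q.comp h) (p.comp g + q.comp k)
        (r.comp f + s.comp h) (r.comp g + s.comp k) := by
  ext x <;> simp only [comp_apply, fromBlocks_apply, add_apply, map_add] <;> abel

theorem fromBlocks_smul_id (n : ℕ) :
    fromBlocks (n • id A) 0 0 (n • id B) = n • id (A × B) := by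
  ext x <;> simp

end AddMonoidHom

open AddMonoidHom in
theorem kani_isogeny_diamond_general
    {A A₁ A₂ B : Type*} [AddCommGroup A] [AddCommGroup A₁]
    [AddCommGroup A₂] [AddCommGroup B]
    (d₁ d₂ : ℕ)
    (φ₁ : A →+ A₁) (φ₁t : A₁ →+ A)
    (φ₂ : A →+ A₂) (φ₂t : A₂ →+ A)
    (φ₁' : A₁ →+ B) (φ₁'t : B →+ A₁)
    (φ₂' : A₂ →+ B) (φ₂'t : B →+ A₂)
    (hφ₁ : φ₁t.comp φ₁ = d₁ • AddMonoidHom.id A)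
    (hφ₂ : φ₂t.comp φ₂ = d₂ • AddMonoidHom.id A)
    (hφ₁'iso' : φ₁'.comp φ₁'t = d₂ • AddMonoidHom.id B)
    (hφ₂'iso' : φ₂'.comp φ₂'t = d₁ • AddMonoidHom.id B)
    (hcomm : φ₁'.comp φ₁ = φ₂'.comp φ₂)
    (hcomm_dual : φ₁t.comp φ₁'t = φ₂t.comp φ₂'t)
    (F : A × B →+ A₁ × A₂) (Ft : A₁ × A₂ →+ A × B)
    (hF : ∀ (a : A) (b : B), F (a, b) = (φ₁ a + φ₁'t b, -φ₂ a + φ₂'t b))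
    (hFt : ∀ (x : A₁) (y : A₂), Ft (x, y) = (φ₁t x - φ₂t y, φ₁' x + φ₂' y)) :
    Ft.comp F = (d₁ + d₂) • AddMonoidHom.id (A × B) := by
  have hF_blocks : F = fromBlocks φ₁ φ₁'t (-φ₂) φ₂'t := eq_fromBlocks_of_apply hF
  have hFt_blocks : Ft = fromBlocks φ₁t (-φ₂t) φ₁' φ₂' :=
    eq_fromBlocks_of_apply fun x y => by rw [hFt, sub_eq_add_neg, AddMonoidHom.neg_apply]
  rw [hF_blocks, hFt_blocks, fromBlocks_comp_fromBlocks, ← fromBlocks_smul_id]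
  congr 1
  · rw [neg_comp, comp_neg, neg_neg, hφ₁, hφ₂, add_smul]
  · rw [hcomm_dual, neg_comp, add_neg_cancel]
  · rw [hcomm, comp_neg, add_neg_cancel]
  · rw [hφ₁'iso', hφ₂'iso', add_comm d₁, add_smul]

/-- Kani: Given a commuting square `φ₁' ∘ φ₁ = φ₂' ∘ φ₂` of
`d₁`- and `d₂`-isogenies of principally polarised abelian varieties (abstracted as
additive groups, each isogeny coming with its polarised dual satisfying
`ψ̃ ∘ ψ = [deg ψ]` and `ψ ∘ ψ̃ = [deg ψ]`, and the dual commuting square), the map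
`F : A × B → A₁ × A₂` with matrix `[[φ₁, φ̃₁'], [-φ₂, φ̃₂']]` satisfies
`F̃ ∘ F = [d₁ + d₂]`, where `F̃` has matrix `[[φ̃₁, -φ̃₂], [φ₁', φ₂']]`. -/
theorem kani_isogeny_diamond
    {A A₁ A₂ B : Type*} [AddCommGroup A] [AddCommGroup A₁]
    [AddCommGroup A₂] [AddCommGroup B]
    (d₁ d₂ : ℕ)
    (φ₁ : A →+ A₁) (φ₁t : A₁ →+ A)
    (φ₂ : A →+ A₂) (φ₂t : A₂ →+ A)
    (φ₁' : A₁ →+ B) (φ₁'t : B →+ A₁)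
    (φ₂' : A₂ →+ B) (φ₂'t : B →+ A₂)
    (hφ₁ : φ₁t.comp φ₁ = d₁ • AddMonoidHom.id A)
    (hφ₁' : φ₁.comp φ₁t = d₁ • AddMonoidHom.id A₁)
    (hφ₂ : φ₂t.comp φ₂ = d₂ • AddMonoidHom.id A)
    (hφ₂' : φ₂.comp φ₂t = d₂ • AddMonoidHom.id A₂)
    (hφ₁'iso : φ₁'t.comp φ₁' = d₂ • AddMonoidHom.id A₁)
    (hφ₁'iso' : φ₁'.comp φ₁'t = d₂ • AddMonoidHom.id B)
    (hφ₂'iso : φ₂'t.comp φ₂' = d₁ • AddMonoidHom.id A₂)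
    (hφ₂'iso' : φ₂'.comp φ₂'t = d₁ • AddMonoidHom.id B)
    (hcomm : φ₁'.comp φ₁ = φ₂'.comp φ₂)
    (hcomm_dual : φ₁t.comp φ₁'t = φ₂t.comp φ₂'t)
    (F : A × B →+ A₁ × A₂) (Ft : A₁ × A₂ →+ A × B)
    (hF : ∀ (a : A) (b : B), F (a, b) = (φ₁ a + φ₁'t b, -φ₂ a + φ₂'t b))
    (hFt : ∀ (x : A₁) (y : A₂), Ft (x, y) = (φ₁t x - φ₂t y, φ₁' x + φ₂' y)) :
    Ft.comp F = (d₁ + d₂) • AddMonoidHom.id (A × B) :=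
  kani_isogeny_diamond_general d₁ d₂ φ₁ φ₁t φ₂ φ₂t φ₁' φ₁'t φ₂' φ₂'t hφ₁ hφ₂ hφ₁'iso' hφ₂'iso' hcomm
    hcomm_dual F Ft hF hFt
end

section
/- Let ι : ℤ[α] ↪ End(E) be an embedding of a quadratic order into the endomorphism ring of a supersingular elliptic curve E, with θ = ι(α) and t = Tr(α). For any prime ℓ and exponent such that m | f_α (m an integer dividing the conductor of ℤ[α]), the order ℤ[(f_α/m)√Δ_K] embeds into End(E) extending ι if and only if the endomorphism 2θ − [t] is divisible by m in End(E). -/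
/-!
If `m ρ = 2θ - t`, squaring and using `(2θ - t)² = f_α² Δ_K` gives `m² ρ² = m² (f_α/m)² Δ_K`;
since `R` has no `ℤ`-torsion the factor `m²` cancels, so divisibility alone already forces
`ρ² = (f_α/m)² Δ_K`.
-/

theorem smul_injective_of_intTorsionFree {M : Type*} [AddCommGroup M]
    (htf : ∀ (k : ℤ) (x : M), k ≠ 0 → k • x = 0 → x = 0) {k : ℤ} (hk : k ≠ 0) :
    Function.Injective (k • · : M → M) :=
  fun x y (h : k • x = k • y) => sub_eq_zero.mp (htf k _ hk (by rw [smul_sub, h, sub_self]))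

theorem sq_eq_smul_one_of_smul_sq_eq {R : Type*} [Ring R]
    (htf : ∀ (k : ℤ) (x : R), k ≠ 0 → k • x = 0 → x = 0) {k c : ℤ} (hk : k ≠ 0) {ρ : R}
    (h : (k • ρ) ^ 2 = (k ^ 2 * c) • (1 : R)) : ρ ^ 2 = c • (1 : R) :=
  smul_injective_of_intTorsionFree htf (pow_ne_zero 2 hk) <| by
    simp only [← smul_pow, h, mul_smul]

/-- Let `θ = ι(α)` in the (torsion-free) endomorphism ring `R` of a
supersingular elliptic curve, with `t = Tr(α)`, so `(2θ - t)² = f_α² Δ_K` in `R`.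
For an integer `m ∣ f_α`, the order `ℤ[(f_α/m)√Δ_K]` embeds into `R` extending `ι`
(i.e. there is `ρ ∈ R` with `ρ² = (f_α/m)² Δ_K` and `m ρ = 2θ - t`) if and only if
`2θ - [t]` is divisible by `m` in `R`. -/
theorem order_embeds_iff_divisible
    {R : Type*} [Ring R]
    (htf : ∀ (k : ℤ) (x : R), k ≠ 0 → k • x = 0 → x = 0)
    (θ : R) (t fα ΔK m : ℤ) (hm : m ∣ fα) (hm0 : m ≠ 0)
    (hθ : ((2 : ℤ) • θ - t • (1 : R)) ^ 2 = (fα ^ 2 * ΔK) • (1 : R)) :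
    (∃ ρ : R, ρ ^ 2 = ((fα / m) ^ 2 * ΔK) • (1 : R) ∧
        m • ρ = (2 : ℤ) • θ - t • (1 : R)) ↔
      ∃ ρ : R, m • ρ = (2 : ℤ) • θ - t • (1 : R) := by
  refine ⟨fun ⟨ρ, _, hρ⟩ => ⟨ρ, hρ⟩, fun ⟨ρ, hρ⟩ => ⟨ρ, ?_, hρ⟩⟩
  obtain ⟨c, rfl⟩ := hm
  rw [Int.mul_ediv_cancel_left c hm0]
  refine sq_eq_smul_one_of_smul_sq_eq htf hm0 ?_
  rw [hρ, hθ, mul_pow, mul_assoc]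
end
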